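/- Let V be a finite-dimensional real vector space, let C ⊆ V be an almost compact cone, and let p > 0 be an integer. Then Symᵖ(C) is an almost compact cone in the space Symᵖ(V) of symmetric tensors; that is, Symᵖ(C) is a convex cone that is closed, pointed (Symᵖ(C) ∩ (−Symᵖ(C)) = {0}), and has nonempty interior in Symᵖ(V). -/

import Mathlib

/-!
A closed pointed cone `C` has a compact base `B = C ∩ {f = 1}` for a linear form `f` that is
positive on `C \ {0}`. By multilinearity `Symᵖ(C)` is the conic hull of the compact set
`q(Bᵖ)`, on which the linear form `g` induced by `(v₁, …, v_p) ↦ ∏ f(vᵢ)` is identically `1`.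
The conic hull of a compact set lying in the hyperplane `{g = 1}` is closed, and it is pointed
since `g` is nonnegative on it and vanishes only at `0`. Finally `C` spans `V`, so `q(Cᵖ)` spans
the span of the range of `q`, which is all of `Symᵖ(V)` by the universal property.
-/

/-- A convex cone `C` in a finite-dimensional real vector space is an *almost compact cone*
if it is a convex cone that is closed, pointed (`C ∩ (−C) = {0}`) and full-dimensional
(nonempty interior). -/
def IsACCone {V : Type*} [NormedAddCommGroup V] [NormedSpace ℝ V] (C : Set V) : Prop :=
  (∀ x ∈ C, ∀ y ∈ C, x + y ∈ C) ∧
  (∀ c : ℝ, 0 ≤ c → ∀ x ∈ C, c • x ∈ C) ∧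
  IsClosed C ∧
  C ∩ (-C) = {0} ∧
  (interior C).Nonempty

open Set Module

/- Carathéodory: the convex hull is covered by the images of the simplices `stdSimplex ℝ (Fin m)`,
`m ≤ finrank ℝ E + 1`, under `(w, z) ↦ ∑ i, w i • z i` with all `z i ∈ s`. -/
theorem IsCompact.convexHull {E : Type*} [NormedAddCommGroup E] [NormedSpace ℝ E]
    [FiniteDimensional ℝ E] {s : Set E} (hs : IsCompact s) :
    IsCompact (_root_.convexHull ℝ s) := by
  have hcover : _root_.convexHull ℝ s = ⋃ m : Fin (finrank ℝ E + 2),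
      (fun wz : (Fin m → ℝ) × (Fin m → E) => ∑ i, wz.1 i • wz.2 i) ''
        (stdSimplex ℝ (Fin m) ×ˢ univ.pi fun _ => s) := by
    refine Subset.antisymm (fun x hx => ?_) (iUnion_subset fun m => ?_)
    · obtain ⟨ι, _, z, w, hzs, hz, hw0, hw1, rfl⟩ := eq_pos_convex_span_of_mem_convexHull hx
      have hcard : Fintype.card ι < finrank ℝ E + 2 := by
        have := Submodule.finrank_le (vectorSpan ℝ (range z))
        have := hz.card_le_finrank_succ
        omega
      let e := (Fintype.equivFin ι).symm
      refine mem_iUnion.2 ⟨⟨_, hcard⟩, (w ∘ e, z ∘ e),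
        ⟨⟨fun i => (hw0 _).le, by simpa [e.sum_comp] using hw1⟩, fun i _ => hzs (mem_range_self _)⟩,
        e.sum_comp fun i => w i • z i⟩
    · rintro _ ⟨wz, ⟨⟨hw0, hw1⟩, hz⟩, rfl⟩
      exact (convex_convexHull ℝ s).sum_mem (fun i _ => hw0 i) hw1
        fun i _ => subset_convexHull ℝ s (hz i trivial)
  rw [hcover]
  exact isCompact_iUnion fun m =>
    ((isCompact_stdSimplex ℝ _).prod (isCompact_univ_pi fun _ => hs)).image (by fun_prop)

namespace PointedCone

section Algebraic

variable {E : Type*} [AddCommGroup E] [Module ℝ E]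

theorem convex_diff_zero_of_salient {K : PointedCone ℝ E} (hK : (K : ConvexCone ℝ E).Salient) :
    Convex ℝ ((K : Set E) \ {0}) := by
  rintro x ⟨hx, hx0⟩ y ⟨hy, hy0⟩ a b ha hb hab
  refine ⟨K.convex hx hy ha hb hab, fun h => ?_⟩
  rcases ha.eq_or_lt with rfl | ha
  · simp_all
  refine hK _ (K.smul_mem ha.le hx) (smul_ne_zero ha.ne' hx0) ?_
  rw [neg_eq_of_add_eq_zero_right h]
  exact K.smul_mem hb hy

theorem mem_hull_image_iff {ι : Type*} {φ : ι → E} {S : Set ι} {s : E} :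
    s ∈ hull ℝ (φ '' S) ↔ ∃ (k : ℕ) (c : Fin k → ℝ) (v : Fin k → ι),
      (∀ j, 0 ≤ c j) ∧ (∀ j, v j ∈ S) ∧ s = ∑ j, c j • φ (v j) := by
  rw [Submodule.mem_span_set']
  constructor
  · rintro ⟨k, c, t, rfl⟩
    choose v hv ht using fun j => (t j).2
    exact ⟨k, fun j => c j, v, fun j => (c j).2, hv, by simp [ht, Nonneg.coe_smul]⟩
  · rintro ⟨k, c, v, hc, hv, rfl⟩
    exact ⟨k, fun j => ⟨c j, hc j⟩, fun j => ⟨φ (v j), mem_image_of_mem φ (hv j)⟩,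
      by simp [Nonneg.mk_smul]⟩

theorem exists_eq_smul_of_mem_hull {T : Set E} (hT : T.Nonempty) {s : E} (hs : s ∈ hull ℝ T) :
    ∃ c : ℝ, 0 ≤ c ∧ ∃ x ∈ convexHull ℝ T, s = c • x := by
  induction hs using Submodule.span_induction with
  | mem x hx => exact ⟨1, zero_le_one, x, subset_convexHull ℝ T hx, (one_smul ℝ x).symm⟩
  | zero =>
    obtain ⟨t, ht⟩ := hT
    exact ⟨0, le_rfl, t, subset_convexHull ℝ T ht, (zero_smul ℝ t).symm⟩
  | add _ _ _ _ hx hy =>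
    obtain ⟨c, hc, x, hx, rfl⟩ := hx
    obtain ⟨d, hd, y, hy, rfl⟩ := hy
    obtain ⟨z, hz, hz'⟩ := (convex_convexHull ℝ T).exists_mem_add_smul_eq hx hy hc hd
    exact ⟨c + d, add_nonneg hc hd, z, hz, hz'.symm⟩
  | smul a _ _ hx =>
    obtain ⟨c, hc, x, hx, rfl⟩ := hx
    exact ⟨a * c, mul_nonneg a.2 hc, x, hx, by rw [← Nonneg.coe_smul, smul_smul]⟩

theorem salient_hull_of_pos {T : Set E} (g : E →ₗ[ℝ] ℝ) (hg : ∀ t ∈ T, 0 < g t) :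
    (hull ℝ T : ConvexCone ℝ E).Salient := by
  have key : ∀ s ∈ hull ℝ T, 0 ≤ g s ∧ (g s = 0 → s = 0) := by
    intro s hs
    induction hs using Submodule.span_induction with
    | mem t ht => exact ⟨(hg t ht).le, fun h => absurd h (hg t ht).ne'⟩
    | zero => simp
    | add x y _ _ hx hy =>
      rw [map_add]
      refine ⟨add_nonneg hx.1 hy.1, fun h => ?_⟩
      rw [hx.2 (by linarith [hx.1, hy.1]), hy.2 (by linarith [hx.1, hy.1]), add_zero]
    | smul a x _ hx =>
      rw [← Nonneg.coe_smul, map_smul, smul_eq_mul]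
      refine ⟨mul_nonneg a.2 hx.1, fun h => ?_⟩
      rcases mul_eq_zero.1 h with ha | hgx
      · rw [ha, zero_smul]
      · rw [hx.2 hgx, smul_zero]
  intro x hx hx0 hnx
  have h₁ := key x hx
  have h₂ := key (-x) hnx
  rw [map_neg] at h₂
  exact hx0 (h₁.2 (by linarith [h₁.1, h₂.1]))

end Algebraic

section FiniteDimensional

variable {E : Type*} [NormedAddCommGroup E] [NormedSpace ℝ E] [FiniteDimensional ℝ E]

/- Separate `0` from the convex hull of the unit vectors of `K`, which is compact and, `K` being
salient, avoids `0`. -/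
theorem exists_mul_norm_le_of_salient {K : PointedCone ℝ E}
    (hclosed : IsClosed (K : Set E)) (hK : (K : ConvexCone ℝ E).Salient) :
    ∃ (f : E →L[ℝ] ℝ) (u : ℝ), 0 < u ∧ ∀ x ∈ K, u * ‖x‖ ≤ f x := by
  set S := (K : Set E) ∩ Metric.sphere 0 1
  have hS : IsCompact S := (isCompact_sphere 0 1).inter_left hclosed
  have hSK : S ⊆ (K : Set E) \ {0} := fun x ⟨hx, hx1⟩ => ⟨hx, fun h0 => by simp_all⟩
  have h0 : (0 : E) ∉ convexHull ℝ S := fun h =>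
    (convexHull_min hSK (convex_diff_zero_of_salient hK) h).2 rfl
  obtain ⟨f, u, hfu, hu⟩ :=
    geometric_hahn_banach_point_closed (convex_convexHull ℝ S) hS.convexHull.isClosed h0
  refine ⟨f, u, by simpa using hfu, fun x hx => ?_⟩
  rcases eq_or_ne x 0 with rfl | hx0
  · simp
  have hn : 0 < ‖x‖ := norm_pos_iff.2 hx0
  have hxS : ‖x‖⁻¹ • x ∈ S := ⟨K.smul_mem (by positivity) hx, by simp [norm_smul, hx0]⟩
  have hux := hu _ (subset_convexHull ℝ S hxS)
  rw [map_smul, smul_eq_mul, lt_inv_mul_iff₀ hn] at hux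
  linarith

theorem exists_isCompact_base_of_salient {K : PointedCone ℝ E}
    (hclosed : IsClosed (K : Set E)) (hK : (K : ConvexCone ℝ E).Salient) :
    ∃ f : E →L[ℝ] ℝ, IsCompact ((K : Set E) ∩ f ⁻¹' {1}) ∧
      ∀ x ∈ K, x ≠ 0 → ∃ c : ℝ, 0 ≤ c ∧ ∃ b ∈ (K : Set E) ∩ f ⁻¹' {1}, x = c • b := by
  obtain ⟨f, u, hu, hf⟩ := K.exists_mul_norm_le_of_salient hclosed hK
  refine ⟨f, Metric.isCompact_of_isClosed_isBounded
    (hclosed.inter (isClosed_singleton.preimage f.continuous)) ?_, fun x hx hx0 => ?_⟩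
  · refine (Metric.isBounded_closedBall (x := 0) (r := u⁻¹)).subset fun x ⟨hx, hfx⟩ => ?_
    have hfx : f x = 1 := hfx
    rw [mem_closedBall_zero_iff, ← one_div, le_div_iff₀ hu]
    linarith [hf x hx]
  · have hfx : 0 < f x := (mul_pos hu (norm_pos_iff.2 hx0)).trans_le (hf x hx)
    refine ⟨f x, hfx.le, (f x)⁻¹ • x, ⟨K.smul_mem (inv_nonneg.2 hfx.le) hx, ?_⟩, ?_⟩
    · simp [hfx.ne']
    · rw [smul_smul, mul_inv_cancel₀ hfx.ne', one_smul]

/- The part of the hull below the level `R` of `g` is the compact set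
`[0, R] • convexHull ℝ T`, and every point has a neighbourhood below some level. -/
theorem isClosed_hull_of_isCompact {T : Set E} (hT : IsCompact T) (g : E →ₗ[ℝ] ℝ)
    (hg : ∀ t ∈ T, g t = 1) : IsClosed (hull ℝ T : Set E) := by
  rcases T.eq_empty_or_nonempty with rfl | hne
  · simp
  have hbase : ∀ x ∈ convexHull ℝ T, g x = 1 := fun x hx =>
    convexHull_min hg (convex_hyperplane g.isLinear 1) hx
  refine isClosed_of_closure_subset fun s hs => ?_
  set L := (fun cx : ℝ × E => cx.1 • cx.2) '' (Icc 0 (g s + 1) ×ˢ convexHull ℝ T)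
  have hL : IsClosed L := ((isCompact_Icc.prod hT.convexHull).image (by fun_prop)).isClosed
  have hbelow : {y | g y < g s + 1} ∩ hull ℝ T ⊆ L := by
    rintro y ⟨hy, hyK⟩
    obtain ⟨c, hc, x, hx, rfl⟩ := exists_eq_smul_of_mem_hull hne hyK
    refine ⟨(c, x), ⟨⟨hc, ?_⟩, hx⟩, rfl⟩
    have hy : c * g x < g s + 1 := by simpa using hy
    rw [hbase x hx, mul_one] at hy
    exact hy.le
  have hLK : L ⊆ hull ℝ T := by
    rintro _ ⟨⟨c, x⟩, ⟨⟨hc, -⟩, hx⟩, rfl⟩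
    exact (hull ℝ T).smul_mem hc (convexHull_min subset_hull (hull ℝ T).convex hx)
  have hopen : IsOpen {y | g y < g s + 1} :=
    isOpen_lt g.continuous_of_finiteDimensional continuous_const
  exact hLK (closure_minimal hbelow hL (hopen.inter_closure ⟨lt_add_one (g s), hs⟩))

theorem interior_nonempty_of_span_eq_top {K : PointedCone ℝ E}
    (h : Submodule.span ℝ (K : Set E) = ⊤) : (interior (K : Set E)).Nonempty := by
  rw [K.convex.interior_nonempty_iff_affineSpan_eq_top,
    AffineSubspace.affineSpan_eq_top_iff_vectorSpan_eq_top_of_nonempty ℝ E E ⟨0, K.zero_mem⟩,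
    vectorSpan_eq_span_vsub_set_right ℝ K.zero_mem]
  simpa using h

end FiniteDimensional

end PointedCone

theorem Submodule.span_eq_top_of_forall_dual_eq_zero {K V : Type*} [Field K] [AddCommGroup V]
    [Module K V] {s : Set V} (h : ∀ f : V →ₗ[K] K, (∀ x ∈ s, f x = 0) → f = 0) :
    span K s = ⊤ := by
  by_contra hne
  obtain ⟨f, hf0, hle⟩ := (span K s).exists_le_ker_of_lt_top (lt_top_iff_ne_top.2 hne)
  exact hf0 (h f fun x hx => hle (subset_span hx))

namespace MultilinearMap

variable {ι : Type*} [Fintype ι]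

theorem apply_eq_sum_basis {R M N κ : Type*} [CommSemiring R] [AddCommMonoid M] [Module R M]
    [AddCommMonoid N] [Module R N] [DecidableEq ι] [Fintype κ]
    (f : MultilinearMap R (fun _ : ι => M) N) (b : Basis κ R M) (v : ι → M) :
    f v = ∑ r : ι → κ, (∏ i, b.repr (v i) (r i)) • f fun i => b (r i) := by
  conv_lhs => rw [show v = fun i => ∑ k, b.repr (v i) k • b k from
    funext fun i => (b.sum_repr (v i)).symm]
  rw [f.map_sum]
  exact Finset.sum_congr rfl fun r _ => f.map_smul_univ _ _

theorem continuous_of_finiteDimensional {𝕜 E F : Type*} [NontriviallyNormedField 𝕜]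
    [CompleteSpace 𝕜] [NormedAddCommGroup E] [NormedSpace 𝕜 E] [FiniteDimensional 𝕜 E]
    [NormedAddCommGroup F] [NormedSpace 𝕜 F] (f : MultilinearMap 𝕜 (fun _ : ι => E) F) :
    Continuous f := by
  classical
  let b := finBasis 𝕜 E
  rw [show ⇑f = fun v => ∑ r : ι → Fin _, (∏ i, b.repr (v i) (r i)) • f fun i => b (r i) from
    funext (f.apply_eq_sum_basis b)]
  refine continuous_finsetSum _ fun r _ => (continuous_finsetProd _ fun i _ => ?_).smul
    continuous_const
  exact (b.coord (r i)).continuous_of_finiteDimensional.comp (continuous_apply i)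

theorem span_image_pi_eq_top {K M N : Type*} [Field K] [AddCommGroup M] [Module K M]
    [FiniteDimensional K M] [AddCommGroup N] [Module K N]
    (f : MultilinearMap K (fun _ : ι => M) N) {A : Set M} (hA : Submodule.span K A = ⊤)
    (hf : Submodule.span K (Set.range f) = ⊤) :
    Submodule.span K (f '' univ.pi fun _ => A) = ⊤ := by
  classical
  let b := Basis.ofSpan hA.ge
  have := FiniteDimensional.fintypeBasisIndex b
  rw [eq_top_iff, ← hf, Submodule.span_le]
  rintro _ ⟨v, rfl⟩
  rw [f.apply_eq_sum_basis b v]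
  exact Submodule.sum_mem _ fun r _ => Submodule.smul_mem _ _ <| Submodule.subset_span
    ⟨_, fun i _ => Basis.ofSpan_subset hA.ge (mem_range_self (r i)), rfl⟩

theorem hull_image_pi_le {M N : Type*} [AddCommGroup M] [Module ℝ M] [AddCommGroup N]
    [Module ℝ N] (f : MultilinearMap ℝ (fun _ : ι => M) N) {A B : Set M}
    (hAB : ∀ x ∈ A, x ≠ 0 → ∃ c : ℝ, 0 ≤ c ∧ ∃ b ∈ B, x = c • b) :
    PointedCone.hull ℝ (f '' univ.pi fun _ => A) ≤
      PointedCone.hull ℝ (f '' univ.pi fun _ => B) := by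
  rw [Submodule.span_le]
  rintro _ ⟨v, hv, rfl⟩
  by_cases h0 : ∃ i, v i = 0
  · obtain ⟨i, hi⟩ := h0
    rw [SetLike.mem_coe, f.map_coord_zero i hi]
    exact zero_mem _
  simp only [not_exists] at h0
  choose c hc b hb hvb using fun i => hAB (v i) (hv i trivial) (h0 i)
  rw [show v = fun i => c i • b i from funext hvb, f.map_smul_univ]
  exact PointedCone.smul_mem _ (Finset.prod_nonneg fun i _ => hc i)
    (PointedCone.subset_hull ⟨b, fun i _ => hb i, rfl⟩)

end MultilinearMap

section IsACCone

variable {E : Type*} [NormedAddCommGroup E] [NormedSpace ℝ E]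

def IsACCone.toPointedCone {C : Set E} (hC : IsACCone C) : PointedCone ℝ E where
  carrier := C
  add_mem' hx hy := hC.1 _ hx _ hy
  zero_mem' := (hC.2.2.2.1.symm ▸ rfl : (0 : E) ∈ C ∩ -C).1
  smul_mem' c _ hx := hC.2.1 c c.2 _ hx

theorem IsACCone.salient {C : Set E} (hC : IsACCone C) :
    (hC.toPointedCone : ConvexCone ℝ E).Salient :=
  hC.toPointedCone.salient_iff_inter_neg_eq_singleton.2 hC.2.2.2.1

theorem IsACCone.span_eq_top {C : Set E} (hC : IsACCone C) : Submodule.span ℝ C = ⊤ :=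
  (Submodule.span ℝ C).eq_top_of_nonempty_interior'
    (hC.2.2.2.2.mono (interior_mono Submodule.subset_span))

theorem PointedCone.isACCone {K : PointedCone ℝ E} (hclosed : IsClosed (K : Set E))
    (hK : (K : ConvexCone ℝ E).Salient) (hint : (interior (K : Set E)).Nonempty) :
    IsACCone (K : Set E) :=
  ⟨fun _ hx _ hy => K.add_mem hx hy, fun _ hc _ hx => K.smul_mem hc hx, hclosed,
    K.salient_iff_inter_neg_eq_singleton.1 hK, hint⟩

end IsACCone

theorem PointedCone.isACCone_hull {E : Type*} [NormedAddCommGroup E] [NormedSpace ℝ E]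
    [FiniteDimensional ℝ E] {T : Set E} (hT : IsCompact T) (g : E →ₗ[ℝ] ℝ)
    (hg : ∀ t ∈ T, g t = 1) (hspan : Submodule.span ℝ T = ⊤) : IsACCone (hull ℝ T : Set E) :=
  (hull ℝ T).isACCone (isClosed_hull_of_isCompact hT g hg)
    (salient_hull_of_pos g fun t ht => (hg t ht).symm ▸ one_pos)
    (interior_nonempty_of_span_eq_top (by rwa [Submodule.span_span_of_tower]))

theorem sym_cone_is_almost_compact_general {V S : Type*}
    [NormedAddCommGroup V] [NormedSpace ℝ V] [FiniteDimensional ℝ V]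
    [NormedAddCommGroup S] [NormedSpace ℝ S] [FiniteDimensional ℝ S]
    (p : ℕ)
    (q : MultilinearMap ℝ (fun _ : Fin p => V) S)
    (huniv : ∀ (U : Type) [AddCommGroup U] [Module ℝ U]
      (T : MultilinearMap ℝ (fun _ : Fin p => V) U),
      (∀ (σ : Equiv.Perm (Fin p)) (v : Fin p → V), T (v ∘ σ) = T v) →
      ∃! t : S →ₗ[ℝ] U, ∀ v : Fin p → V, t (q v) = T v)
    (C : Set V) (hC : IsACCone C) :
    IsACCone {s : S | ∃ (k : ℕ) (c : Fin k → ℝ) (v : Fin k → Fin p → V),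
      (∀ j, 0 ≤ c j) ∧ (∀ j i, v j i ∈ C) ∧ s = ∑ j, c j • q (v j)} := by
  set K := hC.toPointedCone
  obtain ⟨f, hbase, hrays⟩ := K.exists_isCompact_base_of_salient hC.2.2.1 hC.salient
  set B := (K : Set V) ∩ f ⁻¹' {1}
  have hKB : PointedCone.hull ℝ (q '' univ.pi fun _ => C) =
      PointedCone.hull ℝ (q '' univ.pi fun _ => B) :=
    le_antisymm (q.hull_image_pi_le hrays)
      (Submodule.span_mono (image_mono (pi_mono fun _ _ => inter_subset_left)))
  obtain ⟨g, hg, -⟩ := huniv ℝ ((MultilinearMap.mkPiAlgebra ℝ (Fin p) ℝ).compLinearMap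
    fun _ => (f : V →ₗ[ℝ] ℝ)) fun σ v => by simpa using Equiv.prod_comp σ fun i => f (v i)
  have hg_base : ∀ t ∈ q '' univ.pi fun _ => B, g t = 1 := by
    rintro _ ⟨v, hv, rfl⟩
    simpa [hg] using Finset.prod_eq_one fun i _ => (hv i trivial).2
  have hrange : Submodule.span ℝ (Set.range q) = ⊤ :=
    Submodule.span_eq_top_of_forall_dual_eq_zero fun t ht => by
      obtain ⟨_, -, huniq⟩ := huniv ℝ 0 fun _ _ => rfl
      exact (huniq t fun v => ht _ ⟨v, rfl⟩).trans (huniq 0 fun _ => rfl).symm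
  have hspan : Submodule.span ℝ (q '' univ.pi fun _ => B) = ⊤ := by
    refine eq_top_iff.2 ((q.span_image_pi_eq_top hC.span_eq_top hrange).ge.trans ?_)
    exact Submodule.span_le.2 (PointedCone.subset_hull.trans
      ((q.hull_image_pi_le hrays).trans (PointedCone.hull_le_span ℝ _)))
  convert PointedCone.isACCone_hull ((isCompact_univ_pi fun _ => hbase).image
    q.continuous_of_finiteDimensional) g hg_base hspan using 2
  rw [← hKB]
  ext s
  simp [PointedCone.mem_hull_image_iff]

/-- Let `S`, together with the symmetric multilinear map `q : Vᵖ → S` (the symmetrization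
of elementary tensors), realize the `p`-th symmetric power `Symᵖ(V)`: this is expressed by
the universal property `huniv`.  If `C ⊆ V` is an almost compact cone and `p > 0` then
`Symᵖ(C)`, the cone of all finite nonnegative combinations of elements `q(v₁,…,v_p)` with
`vᵢ ∈ C`, is an almost compact cone in `Symᵖ(V)`. -/
theorem sym_cone_is_almost_compact {V S : Type*}
    [NormedAddCommGroup V] [NormedSpace ℝ V] [FiniteDimensional ℝ V]
    [NormedAddCommGroup S] [NormedSpace ℝ S] [FiniteDimensional ℝ S]
    (p : ℕ) (hp : 0 < p)
    (q : MultilinearMap ℝ (fun _ : Fin p => V) S)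
    (hsymm : ∀ (σ : Equiv.Perm (Fin p)) (v : Fin p → V), q (v ∘ σ) = q v)
    (huniv : ∀ (U : Type) [AddCommGroup U] [Module ℝ U]
      (T : MultilinearMap ℝ (fun _ : Fin p => V) U),
      (∀ (σ : Equiv.Perm (Fin p)) (v : Fin p → V), T (v ∘ σ) = T v) →
      ∃! t : S →ₗ[ℝ] U, ∀ v : Fin p → V, t (q v) = T v)
    (C : Set V) (hC : IsACCone C) :
    IsACCone {s : S | ∃ (k : ℕ) (c : Fin k → ℝ) (v : Fin k → Fin p → V),
      (∀ j, 0 ≤ c j) ∧ (∀ j i, v j i ∈ C) ∧ s = ∑ j, c j • q (v j)} :=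
  sym_cone_is_almost_compact_general p q huniv C hC
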